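/- arXiv:2502.17199 — 2 statements merged into one kernel-verified Lean document; each statement's English description precedes it below -/
import Mathlib

section
/- Let P be a finite set of pairs (p, v) with pairwise distinct positions, and let D(P) denote its set of non-dominated pairs. If a new pair (q, u) with q greater than all positions in P is inserted, then D(P ∪ {(q,u)}) = {(p,v) ∈ D(P) : v ≤ u} ∪ {(q,u)}. -/
/-- Non-dominated pairs of a finite set of (position, value) pairs. -/
def nondom {π V : Type*} [LinearOrder π] [LinearOrder V]
    (P : Finset (π × V)) : Set (π × V) :=
  {a | a ∈ P ∧ ¬ ∃ c ∈ P, a.1 < c.1 ∧ c.2 < a.2}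

/-- Appending a pair with the largest position: the new non-dominated set
consists of the old non-dominated pairs with value at most `u`, plus the new pair. -/
theorem stmt3 {π V : Type*} [LinearOrder π] [LinearOrder V]
    (P : Finset (π × V)) (hdist : ∀ a ∈ P, ∀ b ∈ P, a.1 = b.1 → a = b)
    (q : π) (u : V) (hq : ∀ a ∈ P, a.1 < q) :
    nondom (insert (q, u) P) =
      {a | a ∈ nondom P ∧ a.2 ≤ u} ∪ {(q, u)} := by
  ext a
  simp only [nondom, Set.mem_setOf_eq, Set.mem_union, Set.mem_singleton_iff,
    Finset.mem_insert]
  constructor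
  · rintro ⟨ha | ha, hnd⟩
    · right; exact ha
    · left
      refine ⟨⟨ha, fun ⟨c, hc, h1, h2⟩ => hnd ⟨c, Or.inr hc, h1, h2⟩⟩, ?_⟩
      by_contra hu
      exact hnd ⟨(q, u), Or.inl rfl, hq a ha, lt_of_not_ge hu⟩
  · rintro (⟨⟨ha, hnd⟩, hau⟩ | rfl)
    · refine ⟨Or.inr ha, ?_⟩
      rintro ⟨c, hc | hc, h1, h2⟩
      · subst hc; exact absurd h2 (not_lt.2 hau)
      · exact hnd ⟨c, hc, h1, h2⟩
    · refine ⟨Or.inl rfl, ?_⟩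
      rintro ⟨c, hc | hc, h1, h2⟩
      · subst hc; exact lt_irrefl _ h1
      · exact absurd h1 (not_lt.2 (hq c hc).le)
end

section
/- Non-dominated pairs are closed under taking the window's minimizer after left deletions: let P be a finite set of pairs (p,v) with distinct positions and let D(P) be its non-dominated subset. For any threshold t, the minimum-value pair (ties by smallest position) of P_t := {(p,v) ∈ P : p ≥ t} belongs to D(P) whenever P_t is nonempty. In other words, after deleting any prefix of positions, the new minimizer was already stored among the non-dominated pairs. -/
/-- Key correctness of the sliding-window deque: for any threshold `t`, the
minimum-value pair (ties by smallest position) among the pairs with position at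
least `t` is non-dominated in `P`. -/
theorem stmt12 {π V : Type*} [LinearOrder π] [LinearOrder V]
    (P : Finset (π × V)) (hdist : ∀ a ∈ P, ∀ b ∈ P, a.1 = b.1 → a = b)
    (t : π) (m : π × V) (hm : m ∈ P) (hmt : t ≤ m.1)
    (hmin : ∀ a ∈ P, t ≤ a.1 → m.2 < a.2 ∨ (m.2 = a.2 ∧ m.1 ≤ a.1)) :
    ¬ ∃ c ∈ P, m.1 < c.1 ∧ c.2 < m.2 := by
  rintro ⟨c, hc, hpc, hvc⟩
  rcases hmin c hc (le_trans hmt hpc.le) with h | ⟨h, _⟩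
  · exact absurd hvc (not_lt.2 h.le)
  · exact absurd hvc (not_lt.2 h.le)
end
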